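/- Let 𝔖 = {(A_ξ, F_ξ, 𝔅_ξ)}_{ξ∈W} be a tower of permutations and suppose that every subset of W of cardinality at most ℵ₁ has a strict upper bound in W (i.e. the cofinality of W is greater than ω₁). Then ℚ(𝔖) has property K: for every family {p_η : η < ω₁} of conditions in ℚ(𝔖) there is an uncountable set S ⊆ ω₁ such that p_η and p_ζ are compatible for all η, ζ ∈ S. -/

import Mathlib

/-- A finite subalgebra of the Boolean algebra `𝒫(ℕ)` of subsets of `ℕ`. -/
def IsFiniteSubalgebra (𝔅 : Set (Set ℕ)) : Prop :=
  𝔅.Finite ∧ ∅ ∈ 𝔅 ∧ Set.univ ∈ 𝔅 ∧ (∀ X ∈ 𝔅, Xᶜ ∈ 𝔅) ∧ ∀ X ∈ 𝔅, ∀ Y ∈ 𝔅, X ∪ Y ∈ 𝔅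

/-- A tower of permutations `𝔖 = {(A_ξ, F_ξ, 𝔅_ξ)}_{ξ ∈ W}` indexed by a set `W`
of ordinals. -/
structure Tower (W : Set Ordinal) where
  /-- the sets `A_ξ` -/
  A : Ordinal → Set ℕ
  /-- the permutations `F_ξ` of `ℕ` -/
  F : Ordinal → (ℕ → ℕ)
  /-- the finite subalgebras `𝔅_ξ` -/
  Alg : Ordinal → Set (Set ℕ)
  A_inf : ∀ ξ ∈ W, (A ξ).Infinite
  F_bij : ∀ ξ ∈ W, Function.Bijective (F ξ)
  F_seg : ∀ ξ ∈ W, ∀ m ∈ A ξ, Set.BijOn (F ξ) (Set.Iio m) (Set.Iio m)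
  Alg_fin : ∀ ξ ∈ W, IsFiniteSubalgebra (Alg ξ)
  Alg_mono : ∀ ξ ∈ W, ∀ ζ ∈ W, ξ < ζ → Alg ξ ⊆ Alg ζ
  A_ae_sub : ∀ ξ ∈ W, ∀ ζ ∈ W, ξ < ζ → (A ζ \ A ξ).Finite
  F_ae_eq : ∀ ξ ∈ W, ∀ ζ ∈ W, ξ < ζ → ∀ B ∈ Alg ξ,
    (symmDiff (F ζ '' B) (F ξ '' B)).Finite

/-- A condition `p = (a^p, f^p, α^p, 𝔅^p)` in the forcing `ℚ(𝔖)`.  The finite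
partial function `f^p` (whose domain is `{0, …, max(a^p) − 1}`) is modelled as a
total function on `ℕ` which is the identity from `max(a^p)` onwards. -/
structure QCond {W : Set Ordinal} (S : Tower W) where
  /-- the finite nonempty set `a^p` -/
  a : Finset ℕ
  /-- the finite partial permutation `f^p` -/
  f : ℕ → ℕ
  /-- the ordinal `α^p ∈ W` -/
  α : Ordinal
  /-- the finite subalgebra `𝔅^p` -/
  Alg : Set (Set ℕ)
  a_ne : a.Nonempty
  f_seg : ∀ m ∈ a, Set.BijOn f (Set.Iio m) (Set.Iio m)
  f_pad : ∀ i, a.max' a_ne ≤ i → f i = i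
  α_mem : α ∈ W
  max_mem : a.max' a_ne ∈ S.A α
  Alg_fin : IsFiniteSubalgebra Alg

namespace QCond

variable {W : Set Ordinal} {S : Tower W}

/-- `max (a^p)`. -/
def top (p : QCond S) : ℕ := p.a.max' p.a_ne

/-- The order `p ≤ q` on `ℚ(𝔖)`. -/
def le (p q : QCond S) : Prop :=
  p.a ⊆ q.a ∧
  q.a.filter (fun n => n ≤ p.top) = p.a ∧
  (∀ i, i < p.top → q.f i = p.f i) ∧
  p.Alg ⊆ q.Alg ∧
  p.α ≤ q.α ∧
  ({n : ℕ | n ∈ S.A q.α ∧ q.top ≤ n} ∪ ((↑q.a : Set ℕ) \ ↑p.a)) ⊆ S.A p.α ∧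
  ∀ B ∈ p.Alg ∩ S.Alg p.α,
    (∀ m ∈ q.a, ∀ n ∈ q.a, p.top ≤ m → m < n →
      q.f '' (B ∩ Set.Ico m n) = S.F p.α '' (B ∩ Set.Ico m n)) ∧
    (∀ m ∈ S.A q.α, ∀ n ∈ S.A q.α, q.top ≤ m → m < n →
      S.F q.α '' (B ∩ Set.Ico m n) = S.F p.α '' (B ∩ Set.Ico m n))

/-- A subset `D ⊆ ℚ(𝔖)` is dense. -/
def IsDense (D : Set (QCond S)) : Prop := ∀ p : QCond S, ∃ q ∈ D, le p q

/-- Two conditions are compatible. -/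
def Compatible (p q : QCond S) : Prop := ∃ r : QCond S, le p r ∧ le q r

end QCond


/-!
Since the cofinality of `W` exceeds `ω₁`, the ordinals `α^{p_η}` have a common strict upper
bound `ζ ∈ W`. Each `p_η` extends to a condition `q_η` with `α^{q_η} = ζ`: only finitely many
`n` witness `A_ζ ⊄ A_{α^{p_η}}` or a disagreement of `F_ζ(B)` and `F_{α^{p_η}}(B)` for the
finitely many relevant `B`, so we may add to `a^{p_η}` a point `M ∈ A_ζ` beyond all of them,
letting `f` follow `F_{α^{p_η}}` on `[max a^{p_η}, M)`. The pair `(a^{q_η}, f^{q_η})` takes only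
countably many values, so uncountably many `q_η` share it; such conditions differ only in their
algebras, and replacing these by one finite algebra containing both gives a common extension.
-/

open Set Function Cardinal

section Permutations

variable {F : ℕ → ℕ} {m n : ℕ}

theorem image_Ico_of_image_Iio (hF : Injective F) (hm : F '' Iio m = Iio m)
    (hn : F '' Iio n = Iio n) : F '' Ico m n = Ico m n := by
  have hIco : Ico m n = Iio n \ Iio m := by ext; simp only [mem_Ico, mem_sdiff, mem_Iio]; omega
  rw [hIco, image_sdiff hF, hm, hn]

theorem image_inter_Ico_of_image_Iio (hF : Injective F) (hm : F '' Iio m = Iio m)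
    (hn : F '' Iio n = Iio n) (B : Set ℕ) : F '' (B ∩ Ico m n) = F '' B ∩ Ico m n := by
  rw [image_inter hF, image_Ico_of_image_Iio hF hm hn]

theorem bijOn_Iio_ite {g : ℕ → ℕ} {t M : ℕ} (htM : t ≤ M) (hF : Injective F)
    (hg : BijOn g (Iio t) (Iio t)) (hFt : F '' Iio t = Iio t) (hFM : F '' Iio M = Iio M) :
    BijOn (fun i => if i < t then g i else F i) (Iio M) (Iio M) := by
  have hlow : BijOn (fun i => if i < t then g i else F i) (Iio t) (Iio t) :=
    hg.congr fun i hi => (if_pos hi).symm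
  have hhigh : BijOn (fun i => if i < t then g i else F i) (Ico t M) (Ico t M) := by
    have h := hF.injOn.bijOn_image (s := Ico t M)
    rw [image_Ico_of_image_Iio hF hFt hFM] at h
    exact h.congr fun i hi => (if_neg (not_lt.2 hi.1)).symm
  have hdisj : Disjoint (Iio t) (Ico t M) := (Iio_disjoint_Ici le_rfl).mono_right Ico_subset_Ici_self
  rw [← Iio_union_Ico_eq_Iio htM]
  refine hlow.union hhigh ((injOn_union hdisj).2 ⟨hlow.injOn, hhigh.injOn, fun x hx y hy => ?_⟩)
  exact ne_of_lt (lt_of_lt_of_le (hlow.mapsTo hx) (hhigh.mapsTo hy).1)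

end Permutations

theorem exists_isFiniteSubalgebra_superset {T : Set (Set ℕ)} (hT : T.Finite) :
    ∃ 𝔅, IsFiniteSubalgebra 𝔅 ∧ T ⊆ 𝔅 := by
  have := hT.to_subtype
  -- the unions of atoms of `T`, an atom being the set of `i` with a given membership pattern
  let pattern : ℕ → T → Prop := fun i Y => i ∈ (Y : Set ℕ)
  refine ⟨range fun s => pattern ⁻¹' s,
    ⟨finite_range _, ⟨∅, preimage_empty⟩, ⟨univ, preimage_univ⟩, ?_, ?_⟩,
    fun Y hY => ⟨{g | g ⟨Y, hY⟩}, rfl⟩⟩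
  · rintro _ ⟨s, rfl⟩
    exact ⟨sᶜ, preimage_compl⟩
  · rintro _ ⟨s, rfl⟩ _ ⟨s', rfl⟩
    exact ⟨s ∪ s', preimage_union⟩

theorem exists_not_countable_fiber {α β : Type*} [Uncountable β] [Countable α] (f : β → α) :
    ∃ a, ¬ (f ⁻¹' {a}).Countable := by
  by_contra! h
  have := countable_iUnion h
  rw [← preimage_iUnion, iUnion_of_singleton, preimage_univ] at this
  exact not_countable_univ this

theorem mk_lt_aleph_one_ord : #{η : Ordinal.{u} // η < (aleph 1).ord} = aleph 1 := by
  have h := Cardinal.mk_Iio_ordinal (aleph 1).ord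
  rwa [card_ord, lift_aleph, Ordinal.lift_one] at h

theorem mk_range_le_aleph_one {β : Type v} (f : {η : Ordinal.{u} // η < (aleph 1).ord} → β) :
    #(range f) ≤ aleph 1 := by
  have h := mk_range_le_lift (f := f)
  rwa [mk_lt_aleph_one_ord, lift_aleph, Ordinal.lift_one, lift_le_aleph_one] at h

instance : Uncountable {η : Ordinal.{u} // η < (aleph 1).ord} :=
  aleph0_lt_mk_iff.1 (mk_lt_aleph_one_ord ▸ aleph0_lt_aleph_one)

namespace Tower

variable {W : Set Ordinal} (S : Tower W) {ξ ζ : Ordinal}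

theorem image_Iio (hξ : ξ ∈ W) {m : ℕ} (hm : m ∈ S.A ξ) : S.F ξ '' Iio m = Iio m :=
  (S.F_seg ξ hξ m hm).image_eq

theorem image_inter_Ico_congr (hξ : ξ ∈ W) (hζ : ζ ∈ W) {m n : ℕ} (hmξ : m ∈ S.A ξ)
    (hnξ : n ∈ S.A ξ) (hmζ : m ∈ S.A ζ) (hnζ : n ∈ S.A ζ) {B : Set ℕ}
    (hB : ∀ k ∈ Ico m n, k ∈ S.F ζ '' B ↔ k ∈ S.F ξ '' B) :
    S.F ζ '' (B ∩ Ico m n) = S.F ξ '' (B ∩ Ico m n) := by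
  rw [image_inter_Ico_of_image_Iio (S.F_bij ζ hζ).1 (S.image_Iio hζ hmζ) (S.image_Iio hζ hnζ),
    image_inter_Ico_of_image_Iio (S.F_bij ξ hξ).1 (S.image_Iio hξ hmξ) (S.image_Iio hξ hnξ)]
  ext k
  exact and_congr_left (hB k)

theorem exists_forall_ge_agree (hξ : ξ ∈ W) (hζ : ζ ∈ W) (hξζ : ξ < ζ) {𝒞 : Set (Set ℕ)}
    (h𝒞 : 𝒞.Finite) (h𝒞ξ : 𝒞 ⊆ S.Alg ξ) :
    ∃ N, ∀ n, N ≤ n → (n ∈ S.A ζ → n ∈ S.A ξ) ∧ ∀ B ∈ 𝒞, (n ∈ S.F ζ '' B ↔ n ∈ S.F ξ '' B) := by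
  let K := (S.A ζ \ S.A ξ) ∪ ⋃ B ∈ 𝒞, symmDiff (S.F ζ '' B) (S.F ξ '' B)
  have hK : K.Finite := (S.A_ae_sub ξ hξ ζ hζ hξζ).union <|
    h𝒞.biUnion fun B hB => S.F_ae_eq ξ hξ ζ hζ hξζ B (h𝒞ξ hB)
  obtain ⟨N, hN⟩ := hK.bddAbove
  refine ⟨N + 1, fun n hn => ?_⟩
  have hnK : n ∉ K := fun h => absurd (hN h) (by omega)
  refine ⟨fun hnζ => by_contra fun hnξ => hnK (Or.inl ⟨hnζ, hnξ⟩), fun B hB => ?_⟩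
  by_contra hne
  refine hnK (Or.inr (mem_biUnion hB ?_))
  rw [mem_symmDiff]
  tauto

end Tower

namespace QCond

variable {W : Set Ordinal} {S : Tower W}

theorem le_top_of_mem (p : QCond S) {n : ℕ} (hn : n ∈ p.a) : n ≤ p.top := p.a.le_max' n hn

def withAlg (q : QCond S) (𝔅 : Set (Set ℕ)) (h𝔅 : IsFiniteSubalgebra 𝔅) : QCond S :=
  { q with Alg := 𝔅, Alg_fin := h𝔅 }

theorem le_withAlg {p q : QCond S} (h : p.le q) {𝔅 : Set (Set ℕ)} (h𝔅 : IsFiniteSubalgebra 𝔅)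
    (hq𝔅 : q.Alg ⊆ 𝔅) : p.le (q.withAlg 𝔅 h𝔅) :=
  ⟨h.1, h.2.1, h.2.2.1, h.2.2.2.1.trans hq𝔅, h.2.2.2.2⟩

theorem withAlg_congr {q q' : QCond S} (ha : q.a = q'.a) (hf : q.f = q'.f) (hα : q.α = q'.α)
    {𝔅 : Set (Set ℕ)} (h𝔅 : IsFiniteSubalgebra 𝔅) : q.withAlg 𝔅 h𝔅 = q'.withAlg 𝔅 h𝔅 := by
  cases q; cases q'; cases ha; cases hf; cases hα; rfl

theorem compatible_of_le_of_le {p p' q q' : QCond S} (h : p.le q) (h' : p'.le q')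
    (ha : q.a = q'.a) (hf : q.f = q'.f) (hα : q.α = q'.α) : Compatible p p' := by
  obtain ⟨𝔅, h𝔅, hsub⟩ := exists_isFiniteSubalgebra_superset (q.Alg_fin.1.union q'.Alg_fin.1)
  refine ⟨q.withAlg 𝔅 h𝔅, le_withAlg h h𝔅 (subset_union_left.trans hsub), ?_⟩
  rw [withAlg_congr ha hf hα]
  exact le_withAlg h' h𝔅 (subset_union_right.trans hsub)

/-- A countable-valued code determining `a^p` and `f^p` (the latter being the identity from
`max (a^p)` on). -/
def code (p : QCond S) : Finset ℕ × List ℕ := (p.a, (List.range p.top).map p.f)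

theorem a_eq_and_f_eq_of_code_eq {p q : QCond S} (h : p.code = q.code) :
    p.a = q.a ∧ p.f = q.f := by
  have ha : p.a = q.a := congrArg Prod.fst h
  have htop : p.top = q.top := by unfold top; congr
  have hmap : (List.range p.top).map p.f = (List.range q.top).map q.f := congrArg Prod.snd h
  rw [htop] at hmap
  refine ⟨ha, funext fun i => ?_⟩
  rcases lt_or_ge i q.top with hi | hi
  · exact List.map_inj_left.1 hmap i (List.mem_range.2 hi)
  · rw [p.f_pad i (htop.trans_le hi), q.f_pad i hi]

variable {ζ : Ordinal} {M : ℕ}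

theorem max'_insert_of_top_lt (p : QCond S) (htM : p.top < M) :
    (insert M p.a).max' (p.a.insert_nonempty M) = M := by
  rw [Finset.max'_insert M p.a p.a_ne]
  exact max_eq_left htM.le

def extend (p : QCond S) (hζ : ζ ∈ W) (hM : M ∈ S.A ζ) (hMα : M ∈ S.A p.α) (htM : p.top < M) :
    QCond S where
  a := insert M p.a
  f i := if i < M then (if i < p.top then p.f i else S.F p.α i) else i
  α := ζ
  Alg := p.Alg
  a_ne := p.a.insert_nonempty M
  f_seg m hm := by
    rcases Finset.mem_insert.1 hm with rfl | hm
    · refine (bijOn_Iio_ite htM.le (S.F_bij p.α p.α_mem).1 (p.f_seg _ (p.a.max'_mem p.a_ne))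
        (S.image_Iio p.α_mem p.max_mem) (S.image_Iio p.α_mem hMα)).congr fun i hi => ?_
      exact (if_pos (mem_Iio.1 hi)).symm
    · refine (p.f_seg m hm).congr fun i hi => ?_
      have hit : i < p.top := lt_of_lt_of_le hi (p.le_top_of_mem hm)
      rw [if_pos (hit.trans htM), if_pos hit]
  f_pad i hi := if_neg (not_lt.2 ((p.max'_insert_of_top_lt htM).symm.trans_le hi))
  α_mem := hζ
  max_mem := (p.max'_insert_of_top_lt htM).symm ▸ hM
  Alg_fin := p.Alg_fin

theorem le_extend (p : QCond S) (hζ : ζ ∈ W) (hM : M ∈ S.A ζ) (hMα : M ∈ S.A p.α)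
    (htM : p.top < M) (hαζ : p.α ≤ ζ) (hA : ∀ n ∈ S.A ζ, M ≤ n → n ∈ S.A p.α)
    (hF : ∀ B ∈ p.Alg ∩ S.Alg p.α, ∀ n, M ≤ n → (n ∈ S.F ζ '' B ↔ n ∈ S.F p.α '' B)) :
    p.le (p.extend hζ hM hMα htM) := by
  have htop : (p.extend hζ hM hMα htM).top = M := p.max'_insert_of_top_lt htM
  refine ⟨Finset.subset_insert M p.a, ?_, fun i hi => ?_, subset_rfl, hαζ, ?_, fun B hB => ⟨?_, ?_⟩⟩
  · ext x
    simp only [extend, Finset.mem_filter, Finset.mem_insert]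
    constructor
    · rintro ⟨rfl | hx, hxt⟩
      · omega
      · exact hx
    · exact fun hx => ⟨Or.inr hx, p.le_top_of_mem hx⟩
  · exact (if_pos (hi.trans htM)).trans (if_pos hi)
  · rintro n (⟨hn, hMn⟩ | ⟨hn, hnp⟩)
    · exact hA n hn (htop ▸ hMn)
    · rcases Finset.mem_insert.1 hn with rfl | hn
      · exact hMα
      · exact absurd hn hnp
  · intro m hm n hn htm hmn
    have hnle : n ≤ M := htop ▸ (p.extend hζ hM hMα htM).le_top_of_mem hn
    have hmt : m = p.top := by
      rcases Finset.mem_insert.1 hm with rfl | hm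
      · omega
      · exact le_antisymm (p.le_top_of_mem hm) htm
    have hnM : n = M := by
      rcases Finset.mem_insert.1 hn with rfl | hn
      · rfl
      · exact absurd (p.le_top_of_mem hn) (by omega)
    subst hmt hnM
    refine image_congr fun x hx => ?_
    exact (if_pos hx.2.2).trans (if_neg (not_lt.2 hx.2.1))
  · intro m hmζ n hnζ hMm hmn
    rw [htop] at hMm
    exact S.image_inter_Ico_congr p.α_mem hζ (hA m hmζ hMm) (hA n hnζ (by omega)) hmζ hnζ
      fun k hk => hF B hB k (hMm.trans hk.1)

theorem exists_le_of_α_lt (p : QCond S) (hζ : ζ ∈ W) (hlt : p.α < ζ) :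
    ∃ q : QCond S, p.le q ∧ q.α = ζ := by
  obtain ⟨N, hN⟩ := S.exists_forall_ge_agree p.α_mem hζ hlt
    (p.Alg_fin.1.subset inter_subset_left) inter_subset_right
  obtain ⟨M, hM, hNM⟩ := (S.A_inf ζ hζ).exists_gt (max N (p.top + 1))
  have htM : p.top < M := by omega
  refine ⟨p.extend hζ hM ((hN M (by omega)).1 hM) htM, p.le_extend hζ hM _ htM hlt.le
    (fun n hn hMn => (hN n (by omega)).1 hn) (fun B hB n hMn => (hN n (by omega)).2 B hB), rfl⟩

end QCond

/-- If every subset of `W` of cardinality at most `ℵ₁` has a strict upper bound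
in `W`, then `ℚ(𝔖)` has property K: every `ω₁`-indexed family of conditions has
an uncountable pairwise compatible subfamily. -/
theorem propertyK_of_large_cofinality (W : Set Ordinal) (S : Tower W)
    (hcof : ∀ X : Set Ordinal, X ⊆ W → Cardinal.mk ↥X ≤ Cardinal.aleph 1 →
      ∃ ζ ∈ W, ∀ ξ ∈ X, ξ < ζ)
    (p : {η : Ordinal // η < (Cardinal.aleph 1).ord} → QCond S) :
    ∃ T : Set {η : Ordinal // η < (Cardinal.aleph 1).ord}, ¬ T.Countable ∧
      ∀ η ∈ T, ∀ ζ ∈ T, QCond.Compatible (p η) (p ζ) := by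
  obtain ⟨ζ, hζ, hbound⟩ := hcof (range fun η => (p η).α)
    (range_subset_iff.2 fun η => (p η).α_mem) (mk_range_le_aleph_one _)
  choose q hpq hqα using fun η => (p η).exists_le_of_α_lt hζ (hbound _ ⟨η, rfl⟩)
  obtain ⟨c, hc⟩ := exists_not_countable_fiber fun η => (q η).code
  refine ⟨_, hc, fun η hη θ hθ => ?_⟩
  obtain ⟨ha, hf⟩ := QCond.a_eq_and_f_eq_of_code_eq (hη.trans hθ.symm)
  exact QCond.compatible_of_le_of_le (hpq η) (hpq θ) ha hf ((hqα η).trans (hqα θ).symm)
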